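/- In the one-state game with two actions, no DDR strategy (deterministic initialisation and outputs, randomised updates) is outcome-equivalent to the RDD strategy that initially picks uniformly between the pure strategy always playing a and the pure strategy always playing b: a DDR strategy plays a deterministic action at the first step, while the RDD strategy plays a and b each with probability 1/2 at the first step. -/

import Mathlib

open Filter
open scoped Classical

/-- A stochastic Mealy machine for the one-state game with two actions
(`true` = action a, `false` = action b). -/
structure OneMealy (n : ℕ) where
  init : Fin n → ℝ
  next : Fin n → Bool → ℝ
  up : Fin n → Bool → Fin n → ℝ

def Proper {n : ℕ} (N : OneMealy n) : Prop :=
  (∀ m, 0 ≤ N.init m) ∧ (∑ m, N.init m) = 1 ∧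
  (∀ m c, 0 ≤ N.next m c) ∧ (∀ m, ∑ c, N.next m c = 1) ∧
  (∀ m c m', 0 ≤ N.up m c m') ∧ ∀ m c, ∑ m', N.up m c m' = 1

def IsDirac {α : Type} (μ : α → ℝ) : Prop := ∃ x, ∀ y, μ y = if y = x then 1 else 0

def DetInit {n : ℕ} (N : OneMealy n) : Prop := IsDirac N.init
def DetNext {n : ℕ} (N : OneMealy n) : Prop := ∀ m, IsDirac (N.next m)
def DetUp {n : ℕ} (N : OneMealy n) : Prop := ∀ m c, IsDirac (N.up m c)

/-- Bayesian update of the memory distribution upon playing action `c`. -/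
noncomputable def ostep {n : ℕ} (N : OneMealy n) (μ : Fin n → ℝ) (c : Bool) :
    Fin n → ℝ :=
  if (∑ m', μ m' * N.next m' c) = 0 then fun m => ∑ m', μ m' * N.up m' c m
  else fun m => (∑ m', μ m' * N.up m' c m * N.next m' c) / (∑ m', μ m' * N.next m' c)

/-- Distribution over memory states after the word `w` of actions. -/
noncomputable def omemDist {n : ℕ} (N : OneMealy n) (w : List Bool) : Fin n → ℝ :=
  w.foldl (ostep N) N.init

/-- The strategy induced by the machine. -/
noncomputable def oStrat {n : ℕ} (N : OneMealy n) (w : List Bool) (c : Bool) : ℝ :=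
  ∑ m, omemDist N w m * N.next m c

/-- Probability of the cylinder of the finite action word `l` under strategy `σ`. -/
def cylProb (σ : List Bool → Bool → ℝ) (l : List Bool) : ℝ :=
  ∏ i ∈ Finset.range l.length, σ (l.take i) (l.getD i false)

/-- Outcome equivalence in the one-state game: identical cylinder probabilities. -/
noncomputable def OEquiv {n k : ℕ} (N : OneMealy n) (B : OneMealy k) : Prop :=
  ∀ w : List Bool, cylProb (oStrat N) w = cylProb (oStrat B) w

/-- Consistency of an action word with a strategy. -/
def consistentW (σ : List Bool → Bool → ℝ) (w : List Bool) : Prop :=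
  ∀ i < w.length, 0 < σ (w.take i) (w.getD i false)

/-- The RDD machine that initially mixes uniformly between the pure strategy
always playing `a` (memory state `0`) and the pure strategy always playing `b`
(memory state `1`); `true` = a, `false` = b. -/
noncomputable def N13 : OneMealy 2 where
  init := fun _ => 1 / 2
  next := fun m c => if c = decide (m = 0) then 1 else 0
  up := fun m _ m' => if m' = m then 1 else 0

lemma proper_N13 : Proper N13 := by
  refine ⟨fun m => by norm_num [N13], by simp [N13], fun m c => ?_,
    fun m => by simp [N13], fun m c m' => ?_, fun m c => ?_⟩
  · simp only [N13]; split <;> norm_num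
  · simp only [N13]; split <;> norm_num
  · fin_cases m <;> simp [N13]

lemma detNext_N13 : DetNext N13 := fun m => ⟨decide (m = 0), fun c => by simp [N13]⟩

lemma detUp_N13 : DetUp N13 := fun m _ => ⟨m, fun m' => by simp [N13]⟩

lemma oStrat_N13_nil (c : Bool) : oStrat N13 [] c = 1 / 2 := by
  cases c <;> norm_num [oStrat, omemDist, N13, Fin.sum_univ_two]

lemma IsDirac.exists_eq_one {α : Type} {μ : α → ℝ} (h : IsDirac μ) : ∃ x, μ x = 1 := by
  obtain ⟨x, hx⟩ := h
  exact ⟨x, by simp [hx]⟩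

lemma IsDirac.exists_sum_mul_eq {α : Type} [Fintype α] {μ : α → ℝ} (h : IsDirac μ) :
    ∃ x, ∀ f : α → ℝ, ∑ a, μ a * f a = f x := by
  obtain ⟨x, hx⟩ := h
  exact ⟨x, fun f => by simp [hx]⟩

lemma DetInit.exists_oStrat_nil_eq {n : ℕ} {N : OneMealy n} (h : DetInit N) :
    ∃ x, oStrat N [] = N.next x := by
  obtain ⟨x, hx⟩ := IsDirac.exists_sum_mul_eq h
  exact ⟨x, funext fun c => hx fun m => N.next m c⟩

lemma cylProb_singleton (σ : List Bool → Bool → ℝ) (c : Bool) : cylProb σ [c] = σ [] c := by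
  simp [cylProb]

lemma OEquiv.oStrat_nil {n k : ℕ} {N : OneMealy n} {B : OneMealy k} (h : OEquiv N B)
    (c : Bool) : oStrat N [] c = oStrat B [] c := by
  simpa only [cylProb_singleton] using h [c]

theorem no_ddr_equivalent_to_uniform_mix :
    Proper N13 ∧ DetNext N13 ∧ DetUp N13 ∧
    ∀ (k : ℕ) (B : OneMealy k), Proper B → DetInit B → DetNext B →
      ¬ OEquiv N13 B := by
  refine ⟨proper_N13, detNext_N13, detUp_N13, ?_⟩
  rintro k B - hInit hNext hEquiv
  obtain ⟨x, hx⟩ := hInit.exists_oStrat_nil_eq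
  obtain ⟨y, hy⟩ := (hNext x).exists_eq_one
  have h := hEquiv.oStrat_nil y
  rw [oStrat_N13_nil, hx, hy] at h
  norm_num at h
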